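/- arXiv:1003.4595 — 8 statements merged into one kernel-verified Lean document; each statement's English description precedes it below -/
import Mathlib

section
/- Let μ be a fuzzy set of an MTL-algebra L. Then μ is a fuzzy filter of L if and only if for every t ∈ (0,1] the q-level set F_q(t) = {x ∈ L : μ(x) + t > 1} is either empty or a filter of L. -/
/-- An MTL-algebra: a bounded lattice with `⊥ ≠ ⊤`, a product `odot` and residuum `rimp`,
where `odot` is associative, commutative and monotone in each argument, `⊤` is a unit,
the Galois correspondence holds and prelinearity holds. -/
class MTL (L : Type*) extends Lattice L, BoundedOrder L where
  odot : L → L → L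
  rimp : L → L → L
  bot_ne_top : (⊥ : L) ≠ ⊤
  odot_assoc : ∀ x y z : L, odot (odot x y) z = odot x (odot y z)
  odot_comm : ∀ x y : L, odot x y = odot y x
  odot_mono_left : ∀ x y z : L, x ≤ y → odot x z ≤ odot y z
  odot_mono_right : ∀ x y z : L, x ≤ y → odot z x ≤ odot z y
  odot_top : ∀ x : L, odot x ⊤ = x
  galois : ∀ x y z : L, odot x y ≤ z ↔ x ≤ rimp y z
  prelinear : ∀ x y : L, rimp x y ⊔ rimp y x = ⊤

open MTL

variable {L : Type*} [MTL L]

/-- A subset `A` is a filter: `1 ∈ A` and it is closed under modus ponens. -/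
def IsFilter' (A : Set L) : Prop :=
  (⊤ : L) ∈ A ∧ ∀ x y : L, x ∈ A → rimp x y ∈ A → y ∈ A

/-- A fuzzy filter: `μ(1) ≥ μ(x)` and `μ(y) ≥ min(μ(x → y), μ(x))`. -/
def IsFuzzyFilter (μ : L → ℝ) : Prop :=
  (∀ x : L, μ ⊤ ≥ μ x) ∧ ∀ x y : L, μ y ≥ min (μ (rimp x y)) (μ x)

/-! The q-level set `F_q(t)` is the strict upper cut of `μ` at `1 - t`, so the theorem reduces to
the characterisation of fuzzy filters by their nonempty strict cuts `{x | s < μ x}`, `0 ≤ s < 1`: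
a cut through the values `μ ⊤` or `μ y` that contains `x` (and `x → y`) but misses `⊤` (or `y`)
cannot be a filter. -/

theorem IsFuzzyFilter.isFilter'_setOf_lt {μ : L → ℝ} (hμ : IsFuzzyFilter μ) {s : ℝ}
    (hne : {x | s < μ x}.Nonempty) : IsFilter' {x | s < μ x} := by
  obtain ⟨x, hx⟩ := hne
  exact ⟨hx.trans_le (hμ.1 x), fun a b ha hab => (lt_min hab ha).trans_le (hμ.2 a b)⟩

theorem isFuzzyFilter_of_isFilter'_setOf_lt {μ : L → ℝ} (hμ0 : ∀ x, 0 ≤ μ x)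
    (hμ1 : ∀ x, μ x ≤ 1)
    (h : ∀ s, 0 ≤ s → s < 1 → {x | s < μ x}.Nonempty → IsFilter' {x | s < μ x}) :
    IsFuzzyFilter μ := by
  constructor
  · intro x
    by_contra! hx
    exact lt_irrefl (μ ⊤) (h (μ ⊤) (hμ0 ⊤) (hx.trans_le (hμ1 x)) ⟨x, hx⟩).1
  · intro x y
    by_contra! hxy
    obtain ⟨himp, hx⟩ := lt_min_iff.mp hxy
    exact lt_irrefl (μ y) ((h (μ y) (hμ0 y) (hx.trans_le (hμ1 x)) ⟨x, hx⟩).2 x y hx himp)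

theorem isFuzzyFilter_iff_isFilter'_setOf_lt {μ : L → ℝ} (hμ0 : ∀ x, 0 ≤ μ x)
    (hμ1 : ∀ x, μ x ≤ 1) :
    IsFuzzyFilter μ ↔
      ∀ s, 0 ≤ s → s < 1 → {x | s < μ x}.Nonempty → IsFilter' {x | s < μ x} :=
  ⟨fun hμ _ _ _ hne => hμ.isFilter'_setOf_lt hne, isFuzzyFilter_of_isFilter'_setOf_lt hμ0 hμ1⟩

theorem setOf_lt_add_eq {α : Type*} (f : α → ℝ) (a t : ℝ) :
    {x | a < f x + t} = {x | a - t < f x} :=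
  Set.ext fun x => (sub_lt_iff_lt_add (a := a) (b := f x) (c := t)).symm

theorem stmt_1 (μ : L → ℝ) (hμ0 : ∀ x : L, 0 ≤ μ x) (hμ1 : ∀ x : L, μ x ≤ 1) :
    IsFuzzyFilter μ ↔ (∀ t : ℝ, 0 < t → t ≤ 1 → ({x : L | 1 < μ x + t} = ∅ ∨ IsFilter' {x : L | 1 < μ x + t})) := by
  simp only [setOf_lt_add_eq, isFuzzyFilter_iff_isFilter'_setOf_lt hμ0 hμ1]
  constructor
  · intro h t ht0 ht1
    exact (Set.eq_empty_or_nonempty _).imp_right (h (1 - t) (by linarith) (by linarith))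
  · intro h s hs0 hs1 hne
    have hcut := h (1 - s) (by linarith) (by linarith)
    rw [sub_sub_cancel] at hcut
    exact hcut.resolve_left hne.ne_empty
end

section
/- Let μ be a fuzzy set of an MTL-algebra L. Then μ is an (∈,∈∨q)-fuzzy filter of L if and only if for every t ∈ (0, 0.5] the ∈-level set F(t) = {x ∈ L : μ(x) ≥ t} is either empty or a filter of L. -/
open MTL

variable {L : Type*} [MTL L]

/-- An (∈,∈∨q)-fuzzy filter: `μ(1) ≥ min(μ(x), 0.5)` and
`μ(y) ≥ min(μ(x → y), μ(x), 0.5)`. -/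
def IsEIVQFuzzyFilter (μ : L → ℝ) : Prop :=
  (∀ x : L, μ ⊤ ≥ min (μ x) (1/2)) ∧
    ∀ x y : L, μ y ≥ min (min (μ (rimp x y)) (μ x)) (1/2)

section LevelSets

variable {μ : L → ℝ}

theorem IsEIVQFuzzyFilter.isFilter'_setOf_le (h : IsEIVQFuzzyFilter μ) {t : ℝ} (ht : t ≤ 1/2)
    (hne : {x : L | t ≤ μ x}.Nonempty) : IsFilter' {x : L | t ≤ μ x} := by
  obtain ⟨a, ha⟩ := hne
  refine ⟨(le_min ha ht).trans (h.1 a), fun x y hx hxy => ?_⟩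
  exact (le_min (le_min hxy hx) ht).trans (h.2 x y)

theorem isEIVQFuzzyFilter_of_isFilter'_setOf_le (hμ0 : ∀ x : L, 0 ≤ μ x)
    (h : ∀ t : ℝ, 0 < t → t ≤ 1/2 → {x : L | t ≤ μ x}.Nonempty → IsFilter' {x : L | t ≤ μ x}) :
    IsEIVQFuzzyFilter μ := by
  -- A nonpositive lower bound holds trivially; a positive one is attained by some witness `a`,
  -- so its level set is a filter.
  have key : ∀ (t : ℝ) (a : L), t ≤ 1/2 → t ≤ μ a → t ≤ 0 ∨ IsFilter' {x : L | t ≤ μ x} := by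
    intro t a ht hta
    rcases le_or_gt t 0 with ht0 | ht0
    · exact Or.inl ht0
    · exact Or.inr (h t ht0 ht ⟨a, hta⟩)
  refine ⟨fun x => ?_, fun x y => ?_⟩
  · rcases key _ x (min_le_right _ _) (min_le_left _ _) with ht0 | hF
    · exact ht0.trans (hμ0 ⊤)
    · exact hF.1
  · have hx : min (min (μ (rimp x y)) (μ x)) (1/2) ≤ μ x :=
      (min_le_left _ _).trans (min_le_right _ _)
    have hxy : min (min (μ (rimp x y)) (μ x)) (1/2) ≤ μ (rimp x y) :=
      (min_le_left _ _).trans (min_le_left _ _)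
    rcases key _ x (min_le_right _ _) hx with ht0 | hF
    · exact ht0.trans (hμ0 y)
    · exact hF.2 x y hx hxy

end LevelSets

theorem stmt_2_general (μ : L → ℝ) (hμ0 : ∀ x : L, 0 ≤ μ x) :
    IsEIVQFuzzyFilter μ ↔ (∀ t : ℝ, 0 < t → t ≤ 1/2 → ({x : L | t ≤ μ x} = ∅ ∨ IsFilter' {x : L | t ≤ μ x})) := by
  constructor
  · intro h t _ ht
    rcases Set.eq_empty_or_nonempty {x : L | t ≤ μ x} with hempty | hne
    · exact Or.inl hempty
    · exact Or.inr (h.isFilter'_setOf_le ht hne)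
  · intro h
    exact isEIVQFuzzyFilter_of_isFilter'_setOf_le hμ0
      fun t ht0 ht hne => (h t ht0 ht).resolve_left hne.ne_empty

theorem stmt_2 (μ : L → ℝ) (hμ0 : ∀ x : L, 0 ≤ μ x) (hμ1 : ∀ x : L, μ x ≤ 1) :
    IsEIVQFuzzyFilter μ ↔ (∀ t : ℝ, 0 < t → t ≤ 1/2 → ({x : L | t ≤ μ x} = ∅ ∨ IsFilter' {x : L | t ≤ μ x})) :=
  stmt_2_general μ hμ0
end

section
/- Let μ be a fuzzy set of an MTL-algebra L. Then for every t ∈ (0,1] the ∈-level set F(t) = {x ∈ L : μ(x) ≥ t} is either empty or a Boolean filter of L if and only if μ is a fuzzy Boolean filter of L. -/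
open MTL

variable {L : Type*} [MTL L]

/-- A Boolean filter: a filter containing `x ∨ x'` for all `x`, where `x' = x → 0`. -/
def IsBooleanFilter (A : Set L) : Prop :=
  IsFilter' A ∧ ∀ x : L, x ⊔ rimp x ⊥ ∈ A

/-- A fuzzy Boolean filter: a fuzzy filter with `μ(x ∨ x') = μ(1)` for all `x`. -/
def IsFuzzyBooleanFilter (μ : L → ℝ) : Prop :=
  IsFuzzyFilter μ ∧ ∀ x : L, μ (x ⊔ rimp x ⊥) = μ ⊤

def levelSet (μ : L → ℝ) (t : ℝ) : Set L := {x | t ≤ μ x}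

lemma le_of_forall_pos_le_imp_le {a b : ℝ} (hb : 0 ≤ b) (h : ∀ t, 0 < t → t ≤ a → t ≤ b) :
    a ≤ b := by
  rcases lt_or_ge 0 a with ha | ha
  · exact h a ha le_rfl
  · exact ha.trans hb

lemma IsFuzzyFilter.isFilter'_levelSet {μ : L → ℝ} (hμ : IsFuzzyFilter μ) {t : ℝ}
    (hne : (levelSet μ t).Nonempty) : IsFilter' (levelSet μ t) := by
  obtain ⟨z, hz⟩ := hne
  exact ⟨hz.trans (hμ.1 z), fun x y hx hxy => (le_min hxy hx).trans (hμ.2 x y)⟩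

lemma IsFuzzyBooleanFilter.isBooleanFilter_levelSet {μ : L → ℝ} (hμ : IsFuzzyBooleanFilter μ)
    {t : ℝ} (hne : (levelSet μ t).Nonempty) : IsBooleanFilter (levelSet μ t) := by
  have hfilter := hμ.1.isFilter'_levelSet hne
  refine ⟨hfilter, fun x => ?_⟩
  show t ≤ μ (x ⊔ rimp x ⊥)
  rw [hμ.2 x]
  exact hfilter.1

lemma isFuzzyBooleanFilter_of_isBooleanFilter_levelSet {μ : L → ℝ} (hμ0 : ∀ x, 0 ≤ μ x)
    (h : ∀ t, 0 < t → (levelSet μ t).Nonempty → IsBooleanFilter (levelSet μ t)) :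
    IsFuzzyBooleanFilter μ := by
  have htop : ∀ x, μ x ≤ μ ⊤ := fun x =>
    le_of_forall_pos_le_imp_le (hμ0 ⊤) fun t ht hx => (h t ht ⟨x, hx⟩).1.1
  refine ⟨⟨htop, fun x y => ?_⟩, fun x => le_antisymm (htop _) ?_⟩
  · refine le_of_forall_pos_le_imp_le (hμ0 y) fun t ht hmin => ?_
    obtain ⟨hxy, hx⟩ := le_min_iff.mp hmin
    exact (h t ht ⟨x, hx⟩).1.2 x y hx hxy
  · exact le_of_forall_pos_le_imp_le (hμ0 _) fun t ht hx => (h t ht ⟨⊤, hx⟩).2 x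

theorem stmt_7 (μ : L → ℝ) (hμ0 : ∀ x : L, 0 ≤ μ x) (hμ1 : ∀ x : L, μ x ≤ 1) :
    (∀ t : ℝ, 0 < t → t ≤ 1 → ({x : L | t ≤ μ x} = ∅ ∨ IsBooleanFilter {x : L | t ≤ μ x})) ↔ IsFuzzyBooleanFilter μ := by
  constructor
  · intro h
    refine isFuzzyBooleanFilter_of_isBooleanFilter_levelSet hμ0 fun t ht ⟨x, hx⟩ => ?_
    exact (h t ht (hx.trans (hμ1 x))).resolve_left (Set.nonempty_iff_ne_empty.mp ⟨x, hx⟩)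
  · intro hμ t _ _
    exact (Set.eq_empty_or_nonempty (levelSet μ t)).imp_right hμ.isBooleanFilter_levelSet
end

section
/- Let μ be a fuzzy set of an MTL-algebra L. Then μ is a fuzzy Boolean filter of L if and only if for every t ∈ (0,1] the q-level set F_q(t) = {x ∈ L : μ(x) + t > 1} is either empty or a Boolean filter of L. -/
open MTL

variable {L : Type*} [MTL L]

/-! The q-level set `{x | 1 < μ x + t}` is the strict superlevel set `μ ⁻¹' Ioi (1 - t)`, and
`t ∈ (0, 1]` corresponds to `s = 1 - t ∈ [0, 1)`. Each defining inequality `a ≤ b` of a fuzzy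
Boolean filter transfers to the superlevel sets as "`s < a` implies `s < b`"; conversely, if this
holds for all `s ∈ [0, 1)`, testing it at `s = b` (legitimate since `μ` takes values in `[0, 1]`)
gives back `a ≤ b`. -/

open Set

section StrictSuperlevelSets

variable {μ : L → ℝ}

theorem IsFuzzyFilter.isFilter_preimage_Ioi {s : ℝ} (hμ : IsFuzzyFilter μ)
    (hs : (μ ⁻¹' Ioi s).Nonempty) : IsFilter' (μ ⁻¹' Ioi s) := by
  obtain ⟨a, ha⟩ := hs
  exact ⟨ha.trans_le (hμ.1 a), fun x y hx hxy => (lt_min hxy hx).trans_le (hμ.2 x y)⟩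

theorem IsFuzzyBooleanFilter.preimage_Ioi_eq_empty_or_isBooleanFilter
    (hμ : IsFuzzyBooleanFilter μ) (s : ℝ) :
    μ ⁻¹' Ioi s = ∅ ∨ IsBooleanFilter (μ ⁻¹' Ioi s) := by
  refine (μ ⁻¹' Ioi s).eq_empty_or_nonempty.imp id fun hs => ?_
  have hF := hμ.1.isFilter_preimage_Ioi hs
  exact ⟨hF, fun x => by simpa only [mem_preimage, hμ.2 x] using hF.1⟩

theorem le_of_forall_mem_Ico_lt_imp_lt {a b : ℝ} (hb : 0 ≤ b) (ha : a ≤ 1)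
    (h : ∀ s ∈ Ico (0 : ℝ) 1, s < a → s < b) : a ≤ b :=
  not_lt.1 fun hba => lt_irrefl b (h b ⟨hb, hba.trans_le ha⟩ hba)

theorem isFuzzyBooleanFilter_of_preimage_Ioi (hμ0 : ∀ x, 0 ≤ μ x) (hμ1 : ∀ x, μ x ≤ 1)
    (h : ∀ s ∈ Ico (0 : ℝ) 1, μ ⁻¹' Ioi s = ∅ ∨ IsBooleanFilter (μ ⁻¹' Ioi s)) :
    IsFuzzyBooleanFilter μ := by
  have hB : ∀ s ∈ Ico (0 : ℝ) 1, ∀ x, s < μ x → IsBooleanFilter (μ ⁻¹' Ioi s) :=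
    fun s hs x hx => (h s hs).resolve_left (nonempty_iff_ne_empty.1 ⟨x, hx⟩)
  have hTop : ∀ x, μ ⊤ ≥ μ x := fun x =>
    le_of_forall_mem_Ico_lt_imp_lt (hμ0 ⊤) (hμ1 x) fun s hs hx => (hB s hs x hx).1.1
  refine ⟨⟨hTop, fun x y => ?_⟩, fun x => ?_⟩
  · refine le_of_forall_mem_Ico_lt_imp_lt (hμ0 y) ((min_le_right _ _).trans (hμ1 x)) ?_
    intro s hs hmin
    obtain ⟨hxy, hx⟩ := lt_min_iff.1 hmin
    exact (hB s hs x hx).1.2 x y hx hxy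
  · exact le_antisymm (hTop _) <| le_of_forall_mem_Ico_lt_imp_lt (hμ0 _) (hμ1 ⊤)
      fun s hs hs_top => (hB s hs ⊤ hs_top).2 x

end StrictSuperlevelSets

theorem stmt_8 (μ : L → ℝ) (hμ0 : ∀ x : L, 0 ≤ μ x) (hμ1 : ∀ x : L, μ x ≤ 1) :
    IsFuzzyBooleanFilter μ ↔ (∀ t : ℝ, 0 < t → t ≤ 1 → ({x : L | 1 < μ x + t} = ∅ ∨ IsBooleanFilter {x : L | 1 < μ x + t})) := by
  have hq : ∀ t : ℝ, {x : L | 1 < μ x + t} = μ ⁻¹' Ioi (1 - t) := fun t =>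
    ext fun x => (sub_lt_iff_lt_add (a := (1 : ℝ))).symm
  simp only [hq]
  refine ⟨fun hμ t _ _ => hμ.preimage_Ioi_eq_empty_or_isBooleanFilter _, fun h => ?_⟩
  refine isFuzzyBooleanFilter_of_preimage_Ioi hμ0 hμ1 fun s ⟨hs0, hs1⟩ => ?_
  simpa only [sub_sub_cancel] using h (1 - s) (by linarith) (by linarith)
end

section
/- Let μ be a fuzzy set of an MTL-algebra L. Then for every t ∈ (0, 0.5] the ∈-level set F(t) = {x ∈ L : μ(x) ≥ t} is either empty or a Boolean filter of L if and only if μ is an (∈,∈∨q)-fuzzy Boolean filter of L. -/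
open MTL

variable {L : Type*} [MTL L]

/-- An (∈,∈∨q)-fuzzy Boolean filter:
`μ(x → z) ≥ min(μ(x → (z' → y)), μ(y → z), 0.5)`. -/
def IsEIVQFuzzyBooleanFilter (μ : L → ℝ) : Prop :=
  IsEIVQFuzzyFilter μ ∧
    ∀ x y z : L, μ (rimp x z) ≥
      min (min (μ (rimp x (rimp (rimp z ⊥) y))) (μ (rimp y z))) (1/2)

/-! A nonempty level set `{x | t ≤ μ x}` with `0 < t ≤ 1/2` is closed under exactly those rules
whose fuzzy versions `μ b ≥ min (μ a₁, …, μ aₙ, 1/2)` hold, because such a fuzzy inequality can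
be tested at the single level `t = min (μ a₁, …, μ aₙ, 1/2)`. Boolean filters are the filters
closed under `x → (z' → y), y → z ⊢ x → z`: this rule holds in a Boolean filter since
`(z ∨ z') ⊙ (z' → z) ≤ z`, and it yields `z ∨ z'` for `x = 1`, `y = z'` and `z := z ∨ z'`. -/

namespace MTL

lemma odot_rimp_le (a b : L) : odot (rimp a b) a ≤ b := (galois _ _ _).mpr le_rfl

lemma odot_le_right (a b : L) : odot a b ≤ b :=
  calc odot a b ≤ odot ⊤ b := odot_mono_left _ _ _ le_top
    _ = b := by rw [odot_comm, odot_top]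

lemma rimp_eq_top_of_le {a b : L} (h : a ≤ b) : rimp a b = ⊤ :=
  top_le_iff.mp <| (galois _ _ _).mp <| (odot_le_right ⊤ a).trans h

lemma top_rimp (a : L) : rimp ⊤ a = a :=
  le_antisymm ((odot_top _).symm.trans_le (odot_rimp_le _ _))
    ((galois _ _ _).mp (odot_top a).le)

lemma rimp_le_rimp_right {a b : L} (c : L) (h : a ≤ b) : rimp b c ≤ rimp a c :=
  (galois _ _ _).mp <| (odot_mono_right _ _ _ h).trans (odot_rimp_le _ _)

lemma odot_rimp_rimp_le (a b c : L) : odot (rimp a b) (rimp b c) ≤ rimp a c := by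
  refine (galois _ _ _).mp ?_
  rw [odot_comm (rimp a b), odot_assoc]
  exact (odot_mono_right _ _ _ (odot_rimp_le a b)).trans (odot_rimp_le b c)

lemma rimp_le_rimp_rimp_rimp (a b c : L) : rimp b c ≤ rimp (rimp a b) (rimp a c) :=
  (galois _ _ _).mp <| odot_comm (rimp b c) _ ▸ odot_rimp_rimp_le a b c

lemma odot_sup_le (a b c : L) : odot a (b ⊔ c) ≤ odot a b ⊔ odot a c := by
  rw [odot_comm]
  refine (galois _ _ _).mpr (sup_le ?_ ?_) <;> refine (galois _ _ _).mp ?_ <;> rw [odot_comm]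
  exacts [le_sup_left, le_sup_right]

lemma sup_odot_rimp_le (z w : L) : odot (z ⊔ w) (rimp w z) ≤ z := by
  rw [odot_comm]
  exact (odot_sup_le _ _ _).trans (sup_le (odot_le_right _ _) (odot_rimp_le _ _))

lemma rimp_rimp_odot_sup_le (x z w : L) : odot (rimp x (rimp w z)) (z ⊔ w) ≤ rimp x z := by
  refine (galois _ _ _).mp ?_
  rw [odot_assoc, odot_comm (z ⊔ w), ← odot_assoc, odot_comm (odot _ x)]
  exact (odot_mono_right _ _ _ (odot_rimp_le _ _)).trans (sup_odot_rimp_le z w)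

end MTL

namespace IsFilter'

variable {A : Set L}

lemma mem_of_le (hA : IsFilter' A) {a b : L} (ha : a ∈ A) (h : a ≤ b) : b ∈ A :=
  hA.2 a b ha (rimp_eq_top_of_le h ▸ hA.1)

lemma mem_of_odot_le (hA : IsFilter' A) {a b c : L} (ha : a ∈ A) (hb : b ∈ A)
    (h : odot a b ≤ c) : c ∈ A :=
  hA.2 a c ha <| hA.mem_of_le hb <| (galois _ _ _).mp <| odot_comm b a ▸ h

lemma rimp_trans (hA : IsFilter' A) {a b c : L} (hab : rimp a b ∈ A) (hbc : rimp b c ∈ A) :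
    rimp a c ∈ A :=
  hA.mem_of_odot_le hab hbc (odot_rimp_rimp_le a b c)

end IsFilter'

lemma isBooleanFilter_iff {A : Set L} :
    IsBooleanFilter A ↔ IsFilter' A ∧
      ∀ x y z : L, rimp x (rimp (rimp z ⊥) y) ∈ A → rimp y z ∈ A → rimp x z ∈ A := by
  refine ⟨fun hA => ⟨hA.1, fun x y z h₁ h₂ => ?_⟩, fun ⟨hA, h⟩ => ⟨hA, fun w => ?_⟩⟩
  · have hx : rimp x (rimp (rimp z ⊥) z) ∈ A :=
      hA.1.rimp_trans h₁ (hA.1.mem_of_le h₂ (rimp_le_rimp_rimp_rimp _ y z))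
    exact hA.1.mem_of_odot_le hx (hA.2 z) (rimp_rimp_odot_sup_le x z _)
  · have hw := h ⊤ (rimp w ⊥) (w ⊔ rimp w ⊥)
    rw [top_rimp, top_rimp, rimp_eq_top_of_le (rimp_le_rimp_right ⊥ le_sup_left),
      rimp_eq_top_of_le le_sup_right] at hw
    exact hw hA.1 hA.1

lemma min_le_of_forall_pos_le {m c b : ℝ} (hb : 0 ≤ b)
    (h : ∀ t, 0 < t → t ≤ c → t ≤ m → t ≤ b) : min m c ≤ b := by
  rcases le_or_gt (min m c) 0 with hle | hpos
  · exact hle.trans hb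
  · exact h _ hpos (min_le_right _ _) (min_le_left _ _)

lemma isEIVQFuzzyBooleanFilter_of_levelSet {μ : L → ℝ} (hμ0 : ∀ x : L, 0 ≤ μ x)
    (H : ∀ t : ℝ, 0 < t → t ≤ 1/2 → ∀ a : L, t ≤ μ a → IsBooleanFilter {x : L | t ≤ μ x}) :
    IsEIVQFuzzyBooleanFilter μ := by
  refine ⟨⟨fun x => ?_, fun x y => ?_⟩, fun x y z => ?_⟩ <;>
    refine min_le_of_forall_pos_le (hμ0 _) fun t ht0 ht hm => ?_
  · exact (H t ht0 ht x hm).1.1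
  · obtain ⟨hxy, hx⟩ := le_min_iff.mp hm
    exact (H t ht0 ht x hx).1.2 x y hx hxy
  · obtain ⟨h₁, h₂⟩ := le_min_iff.mp hm
    exact (isBooleanFilter_iff.mp (H t ht0 ht _ h₁)).2 x y z h₁ h₂

lemma IsEIVQFuzzyBooleanFilter.isBooleanFilter_levelSet {μ : L → ℝ}
    (hF : IsEIVQFuzzyBooleanFilter μ) {t : ℝ} (ht : t ≤ 1/2) {a : L} (ha : t ≤ μ a) :
    IsBooleanFilter {x : L | t ≤ μ x} :=
  isBooleanFilter_iff.mpr
    ⟨⟨(hF.1.1 a).trans' (le_min ha ht),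
        fun x y hx hxy => (hF.1.2 x y).trans' (le_min (le_min hxy hx) ht)⟩,
      fun x y z h₁ h₂ => (hF.2 x y z).trans' (le_min (le_min h₁ h₂) ht)⟩

theorem stmt_9_general (μ : L → ℝ) (hμ0 : ∀ x : L, 0 ≤ μ x) :
    (∀ t : ℝ, 0 < t → t ≤ 1/2 → ({x : L | t ≤ μ x} = ∅ ∨ IsBooleanFilter {x : L | t ≤ μ x})) ↔ IsEIVQFuzzyBooleanFilter μ := by
  constructor
  · refine fun H => isEIVQFuzzyBooleanFilter_of_levelSet hμ0 fun t ht0 ht a ha => ?_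
    exact (H t ht0 ht).resolve_left (Set.nonempty_iff_ne_empty.mp ⟨a, ha⟩)
  · intro hF t _ ht
    rcases Set.eq_empty_or_nonempty {x : L | t ≤ μ x} with hempty | ⟨a, ha⟩
    · exact Or.inl hempty
    · exact Or.inr (hF.isBooleanFilter_levelSet ht ha)

theorem stmt_9 (μ : L → ℝ) (hμ0 : ∀ x : L, 0 ≤ μ x) (hμ1 : ∀ x : L, μ x ≤ 1) :
    (∀ t : ℝ, 0 < t → t ≤ 1/2 → ({x : L | t ≤ μ x} = ∅ ∨ IsBooleanFilter {x : L | t ≤ μ x})) ↔ IsEIVQFuzzyBooleanFilter μ :=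
  stmt_9_general μ hμ0
end

section
/- Let μ be a fuzzy set of an MTL-algebra L. Then μ is a fuzzy MV-filter of L if and only if for every t ∈ (0,1] the q-level set F_q(t) = {x ∈ L : μ(x) + t > 1} is either empty or an MV-filter of L. -/
open MTL

variable {L : Type*} [MTL L]

/-- An MV-filter: a filter such that `x → y ∈ A` implies `((y → x) → x) → y ∈ A`. -/
def IsMVFilter (A : Set L) : Prop :=
  IsFilter' A ∧ ∀ x y : L, rimp x y ∈ A → rimp (rimp (rimp y x) x) y ∈ A

/-- A fuzzy MV-filter: a fuzzy filter with `μ(((y → x) → x) → y) ≥ μ(x → y)`. -/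
def IsFuzzyMVFilter (μ : L → ℝ) : Prop :=
  IsFuzzyFilter μ ∧ ∀ x y : L, μ (rimp (rimp (rimp y x) x) y) ≥ μ (rimp x y)

/-- The q-level set `F_q(t)` of the paper. -/
def qLevel {α : Type*} (μ : α → ℝ) (t : ℝ) : Set α :=
  {x | 1 < μ x + t}

@[simp]
lemma mem_qLevel {α : Type*} {μ : α → ℝ} {t : ℝ} {x : α} : x ∈ qLevel μ t ↔ 1 < μ x + t :=
  Iff.rfl

lemma le_of_forall_one_lt_add_imp {a b : ℝ} (ha : a ≤ 1) (hb : 0 ≤ b)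
    (h : ∀ t : ℝ, 0 < t → t ≤ 1 → 1 < a + t → 1 < b + t) : a ≤ b := by
  by_contra! hba
  -- `t = 1 - (a + b) / 2` lies in `(0, 1]` and strictly between `1 - a` and `1 - b`.
  have := h (1 - (a + b) / 2) (by linarith) (by linarith) (by linarith)
  linarith

lemma IsFuzzyFilter.isFilter_qLevel {μ : L → ℝ} (hμ : IsFuzzyFilter μ) {t : ℝ}
    (hne : (qLevel μ t).Nonempty) : IsFilter' (qLevel μ t) := by
  obtain ⟨x₀, hx₀⟩ := hne
  refine ⟨?_, fun x y hx hxy => ?_⟩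
  · rw [mem_qLevel] at hx₀ ⊢
    linarith [hμ.1 x₀]
  · rw [mem_qLevel] at hx hxy ⊢
    have hmin : 1 - t < min (μ (rimp x y)) (μ x) := lt_min (by linarith) (by linarith)
    linarith [hμ.2 x y]

lemma IsFuzzyMVFilter.isMVFilter_qLevel {μ : L → ℝ} (hμ : IsFuzzyMVFilter μ) {t : ℝ}
    (hne : (qLevel μ t).Nonempty) : IsMVFilter (qLevel μ t) := by
  refine ⟨hμ.1.isFilter_qLevel hne, fun x y hxy => ?_⟩
  rw [mem_qLevel] at hxy ⊢
  linarith [hμ.2 x y]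

lemma isFuzzyMVFilter_of_isMVFilter_qLevel {μ : L → ℝ} (hμ0 : ∀ x, 0 ≤ μ x)
    (hμ1 : ∀ x, μ x ≤ 1)
    (h : ∀ t : ℝ, 0 < t → t ≤ 1 → (qLevel μ t).Nonempty → IsMVFilter (qLevel μ t)) :
    IsFuzzyMVFilter μ := by
  have hF : ∀ t, 0 < t → t ≤ 1 → ∀ x, x ∈ qLevel μ t → IsMVFilter (qLevel μ t) :=
    fun t ht0 ht1 x hx => h t ht0 ht1 ⟨x, hx⟩
  refine ⟨⟨fun x => ?_, fun x y => ?_⟩, fun x y => ?_⟩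
  · exact le_of_forall_one_lt_add_imp (hμ1 x) (hμ0 ⊤) fun t ht0 ht1 hx =>
      (hF t ht0 ht1 x hx).1.1
  · refine le_of_forall_one_lt_add_imp ((min_le_right _ _).trans (hμ1 x)) (hμ0 y)
      fun t ht0 ht1 hmin => ?_
    rw [← min_add_add_right, lt_min_iff] at hmin
    exact (hF t ht0 ht1 x hmin.2).1.2 x y hmin.2 hmin.1
  · exact le_of_forall_one_lt_add_imp (hμ1 _) (hμ0 _) fun t ht0 ht1 hxy =>
      (hF t ht0 ht1 _ hxy).2 x y hxy

theorem stmt_14 (μ : L → ℝ) (hμ0 : ∀ x : L, 0 ≤ μ x) (hμ1 : ∀ x : L, μ x ≤ 1) :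
    IsFuzzyMVFilter μ ↔ (∀ t : ℝ, 0 < t → t ≤ 1 → ({x : L | 1 < μ x + t} = ∅ ∨ IsMVFilter {x : L | 1 < μ x + t})) := by
  refine ⟨fun hμ t _ _ => ?_, fun h => ?_⟩
  · exact (Set.eq_empty_or_nonempty (qLevel μ t)).imp id hμ.isMVFilter_qLevel
  · exact isFuzzyMVFilter_of_isMVFilter_qLevel hμ0 hμ1 fun t ht0 ht1 hne =>
      (h t ht0 ht1).resolve_left hne.ne_empty
end

section
/- Let μ be a fuzzy set of an MTL-algebra L. Then for every t ∈ (0,1] the ∈-level set F(t) = {x ∈ L : μ(x) ≥ t} is either empty or a G-filter of L if and only if μ is a fuzzy G-filter of L. -/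
open MTL

variable {L : Type*} [MTL L]

/-- A G-filter: a filter such that `(x ⊙ x) → y ∈ A` implies `x → y ∈ A`. -/
def IsGFilter (A : Set L) : Prop :=
  IsFilter' A ∧ ∀ x y : L, rimp (odot x x) y ∈ A → rimp x y ∈ A

/-- A fuzzy G-filter: a fuzzy filter with `μ(x → y) ≥ μ((x ⊙ x) → y)`. -/
def IsFuzzyGFilter (μ : L → ℝ) : Prop :=
  IsFuzzyFilter μ ∧ ∀ x y : L, μ (rimp x y) ≥ μ (rimp (odot x x) y)

/-!
Each defining inequality `a ≤ μ b` of a fuzzy (G-)filter is the membership `b ∈ F(a)`, so it is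
read off the level set at `t = a`, which is nonempty since `a` is a value of `μ` (or a minimum
of two values); levels `a ≤ 0` are covered by `0 ≤ μ`.
-/

theorem le_of_pos_imp_le {a b : ℝ} (hb : 0 ≤ b) (h : 0 < a → a ≤ b) : a ≤ b :=
  (le_or_gt a 0).elim (fun ha => ha.trans hb) h

section LevelSets

variable (μ : L → ℝ)

theorem isFilter'_setOf_le_of_isFuzzyFilter (hμ : IsFuzzyFilter μ) {t : ℝ} {z : L}
    (hz : t ≤ μ z) : IsFilter' {x : L | t ≤ μ x} :=
  ⟨hz.trans (hμ.1 z), fun x y hx hxy => (le_min hxy hx).trans (hμ.2 x y)⟩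

theorem isGFilter_setOf_le_of_isFuzzyGFilter (hμ : IsFuzzyGFilter μ) {t : ℝ} {z : L}
    (hz : t ≤ μ z) : IsGFilter {x : L | t ≤ μ x} :=
  ⟨isFilter'_setOf_le_of_isFuzzyFilter μ hμ.1 hz, fun x y hxy => hxy.trans (hμ.2 x y)⟩

variable {μ}

theorem isFuzzyFilter_of_forall_isFilter' (hμ0 : ∀ x : L, 0 ≤ μ x)
    (h : ∀ t : ℝ, 0 < t → ∀ z : L, t ≤ μ z → IsFilter' {x : L | t ≤ μ x}) :
    IsFuzzyFilter μ := by
  refine ⟨fun x => le_of_pos_imp_le (hμ0 _) fun hx => (h _ hx x le_rfl).1, fun x y => ?_⟩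
  refine le_of_pos_imp_le (hμ0 _) fun ht => ?_
  exact (h _ ht x (min_le_right _ _)).2 x y (show _ ≤ μ x from min_le_right _ _)
    (show _ ≤ μ (rimp x y) from min_le_left _ _)

theorem isFuzzyGFilter_of_forall_isGFilter (hμ0 : ∀ x : L, 0 ≤ μ x)
    (h : ∀ t : ℝ, 0 < t → ∀ z : L, t ≤ μ z → IsGFilter {x : L | t ≤ μ x}) :
    IsFuzzyGFilter μ :=
  ⟨isFuzzyFilter_of_forall_isFilter' hμ0 fun t ht z hz => (h t ht z hz).1,
    fun x y => le_of_pos_imp_le (hμ0 _) fun ht => (h _ ht _ le_rfl).2 x y (le_refl (μ _))⟩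

end LevelSets

theorem stmt_17 (μ : L → ℝ) (hμ0 : ∀ x : L, 0 ≤ μ x) (hμ1 : ∀ x : L, μ x ≤ 1) :
    (∀ t : ℝ, 0 < t → t ≤ 1 → ({x : L | t ≤ μ x} = ∅ ∨ IsGFilter {x : L | t ≤ μ x})) ↔ IsFuzzyGFilter μ := by
  constructor
  · intro h
    refine isFuzzyGFilter_of_forall_isGFilter hμ0 fun t ht z hz => ?_
    exact (h t ht (hz.trans (hμ1 z))).resolve_left (Set.nonempty_iff_ne_empty.mp ⟨z, hz⟩)
  · intro hμ t _ _
    rcases Set.eq_empty_or_nonempty {x : L | t ≤ μ x} with hempty | ⟨z, hz⟩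
    · exact Or.inl hempty
    · exact Or.inr (isGFilter_setOf_le_of_isFuzzyGFilter μ hμ hz)
end

section
/- Let μ be a fuzzy set of an MTL-algebra L. Then for every t ∈ (0, 0.5] the ∈-level set F(t) = {x ∈ L : μ(x) ≥ t} is either empty or a G-filter of L if and only if μ is an (∈,∈∨q)-fuzzy G-filter of L. -/
open MTL

variable {L : Type*} [MTL L]

/-- An (∈,∈∨q)-fuzzy G-filter: `μ(x → y) ≥ min(μ((x ⊙ x) → y), 0.5)`. -/
def IsEIVQFuzzyGFilter (μ : L → ℝ) : Prop :=
  IsEIVQFuzzyFilter μ ∧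
    ∀ x y : L, μ (rimp x y) ≥ min (μ (rimp (odot x x) y)) (1/2)

/-- A condition `b ≥ min a 0.5` can be checked level by level, on the level sets for `t ∈ (0, 0.5]`;
the levels `t ≤ 0` are covered by `0 ≤ b`. -/
theorem min_half_le_of_forall_level {a b : ℝ} (hb : 0 ≤ b)
    (h : ∀ t : ℝ, 0 < t → t ≤ 1/2 → t ≤ a → t ≤ b) : min a (1/2) ≤ b := by
  rcases le_or_gt (min a (1/2)) 0 with hle | hpos
  · exact hle.trans hb
  · exact h _ hpos (min_le_right _ _) (min_le_left _ _)

theorem isGFilter_levelSet {μ : L → ℝ} (hμ : IsEIVQFuzzyGFilter μ) {t : ℝ} (ht : t ≤ 1/2)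
    {z : L} (hz : t ≤ μ z) : IsGFilter {x : L | t ≤ μ x} := by
  obtain ⟨⟨htop, hmp⟩, hG⟩ := hμ
  refine ⟨⟨(le_min hz ht).trans (htop z), fun x y hx hxy => ?_⟩, fun x y hxy => ?_⟩
  · exact (le_min (le_min hxy hx) ht).trans (hmp x y)
  · exact (le_min hxy ht).trans (hG x y)

theorem isEIVQFuzzyGFilter_of_isGFilter_levelSet {μ : L → ℝ} (hμ0 : ∀ x : L, 0 ≤ μ x)
    (h : ∀ t : ℝ, 0 < t → t ≤ 1/2 → ∀ z : L, t ≤ μ z → IsGFilter {x : L | t ≤ μ x}) :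
    IsEIVQFuzzyGFilter μ := by
  refine ⟨⟨fun x => ?_, fun x y => ?_⟩, fun x y => ?_⟩
  · exact min_half_le_of_forall_level (hμ0 _) fun t ht ht2 hx => (h t ht ht2 x hx).1.1
  · refine min_half_le_of_forall_level (hμ0 _) fun t ht ht2 hmin => ?_
    have hxy : t ≤ μ (rimp x y) := hmin.trans (min_le_left _ _)
    have hx : t ≤ μ x := hmin.trans (min_le_right _ _)
    exact (h t ht ht2 x hx).1.2 x y hx hxy
  · exact min_half_le_of_forall_level (hμ0 _) fun t ht ht2 hxy => (h t ht ht2 _ hxy).2 x y hxy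

theorem stmt_18_general (μ : L → ℝ) (hμ0 : ∀ x : L, 0 ≤ μ x) :
    (∀ t : ℝ, 0 < t → t ≤ 1/2 → ({x : L | t ≤ μ x} = ∅ ∨ IsGFilter {x : L | t ≤ μ x})) ↔ IsEIVQFuzzyGFilter μ := by
  constructor
  · intro h
    refine isEIVQFuzzyGFilter_of_isGFilter_levelSet hμ0 fun t ht ht2 z hz => ?_
    exact (h t ht ht2).resolve_left (Set.nonempty_iff_ne_empty.mp ⟨z, hz⟩)
  · intro hμ t _ ht2
    rcases Set.eq_empty_or_nonempty {x : L | t ≤ μ x} with hempty | ⟨z, hz⟩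
    · exact Or.inl hempty
    · exact Or.inr (isGFilter_levelSet hμ ht2 hz)

theorem stmt_18 (μ : L → ℝ) (hμ0 : ∀ x : L, 0 ≤ μ x) (hμ1 : ∀ x : L, μ x ≤ 1) :
    (∀ t : ℝ, 0 < t → t ≤ 1/2 → ({x : L | t ≤ μ x} = ∅ ∨ IsGFilter {x : L | t ≤ μ x})) ↔ IsEIVQFuzzyGFilter μ :=
  stmt_18_general μ hμ0
end
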